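/- Let D > 0, let f(x) = x², and let g : [0,1] → ℝ be a function with sup_{x ∈ [0,1]} |g(x) − x²| ≤ δ. Define Φ(w,x) = 2D²·(g(|w+x|/(2D)) − g(|w|/(2D)) − g(|x|/(2D))). Then for all w, x ∈ [−D,D], |Φ(w,x) − w·x| ≤ 6D²δ. -/
import Mathlib


/-- If g approximates the squaring function on [0,1] with sup-error δ, then
    Φ(w,x) = 2D²·(g(|w+x|/(2D)) − g(|w|/(2D)) − g(|x|/(2D))) approximates the
    product w·x on [−D,D]² with error at most 6D²δ. -/
theorem product_network_error_bound (D δ : ℝ) (hD : 0 < D) (g : ℝ → ℝ)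
    (hg : ∀ x ∈ Set.Icc (0 : ℝ) 1, |g x - x ^ 2| ≤ δ) :
    ∀ w ∈ Set.Icc (-D) D, ∀ x ∈ Set.Icc (-D) D,
      |2 * D ^ 2 * (g (|w + x| / (2 * D)) - g (|w| / (2 * D)) - g (|x| / (2 * D)))
          - w * x| ≤ 6 * D ^ 2 * δ := by
  intro w hw x hx
  have hD2 : (0:ℝ) < 2 * D := by linarith
  have mem : ∀ y : ℝ, |y| ≤ 2 * D → |y| / (2 * D) ∈ Set.Icc (0:ℝ) 1 := by
    intro y hy
    constructor
    · positivity
    · rw [div_le_one hD2]; exact hy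
  have hw' : |w| ≤ 2 * D := by
    rw [abs_le]; constructor <;> [linarith [hw.1]; linarith [hw.2]]
  have hx' : |x| ≤ 2 * D := by
    rw [abs_le]; constructor <;> [linarith [hx.1]; linarith [hx.2]]
  have hwx' : |w + x| ≤ 2 * D := by
    rw [abs_le]; constructor <;>
      [linarith [hw.1, hx.1]; linarith [hw.2, hx.2]]
  have e1 := hg _ (mem _ hwx')
  have e2 := hg _ (mem _ hw')
  have e3 := hg _ (mem _ hx')
  have key : w * x = 2 * D ^ 2 * ((|w + x| / (2 * D)) ^ 2 - (|w| / (2 * D)) ^ 2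
      - (|x| / (2 * D)) ^ 2) := by
    have : ∀ y : ℝ, (|y| / (2 * D)) ^ 2 = y ^ 2 / (4 * D ^ 2) := by
      intro y; rw [div_pow, sq_abs]; ring_nf
    rw [this, this, this]
    field_simp
    ring
  set a := |w + x| / (2 * D)
  set b := |w| / (2 * D)
  set c := |x| / (2 * D)
  have : 2 * D ^ 2 * (g a - g b - g c) - w * x
      = 2 * D ^ 2 * ((g a - a ^ 2) - (g b - b ^ 2) - (g c - c ^ 2)) := by
    rw [key]; ring
  rw [this]
  have hD2sq : (0:ℝ) ≤ 2 * D ^ 2 := by positivity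
  rw [abs_mul, abs_of_nonneg hD2sq]
  have : |g a - a ^ 2 - (g b - b ^ 2) - (g c - c ^ 2)| ≤ 3 * δ := by
    calc |g a - a ^ 2 - (g b - b ^ 2) - (g c - c ^ 2)|
        ≤ |g a - a ^ 2 - (g b - b ^ 2)| + |g c - c ^ 2| := abs_sub _ _
      _ ≤ |g a - a ^ 2| + |g b - b ^ 2| + |g c - c ^ 2| := by
          have := abs_sub (g a - a ^ 2) (g b - b ^ 2); linarith
      _ ≤ 3 * δ := by linarith
  nlinarith [this]
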